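/- Let E > 0 and T_A, T_B > 0. Let γ(T) = diag(1, e^{−E/T})/(1 + e^{−E/T}) be the qubit Gibbs state with gap E at temperature T, let ρ = γ(T_A) ⊗ γ(T_B) on ℂ² ⊗ ℂ², and let H = diag(0,E) ⊗ I₂ + I₂ ⊗ diag(0,E). Then for every 4×4 unitary U: tr(U ρ U† H) ≥ tr(ρ H). That is, no unitary heat engine exists on two two-level systems with equal energy gaps, whatever their temperatures. -/
import Mathlib


open Kronecker

/-- The Gibbs state of a two-level system with energy gap `E` at temperature
`T`: the diagonal matrix `diag(1, e^{-E/T}) / (1 + e^{-E/T})`. -/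
noncomputable def qubitGibbs (E T : ℝ) : Matrix (Fin 2) (Fin 2) ℂ :=
  Matrix.diagonal fun i =>
    (((if i = 0 then 1 else Real.exp (-E / T)) / (1 + Real.exp (-E / T)) : ℝ) : ℂ)

/-- The Hamiltonian `diag(0, E)` of a two-level system with gap `E`. -/
noncomputable def qubitHam (E : ℝ) : Matrix (Fin 2) (Fin 2) ℂ :=
  Matrix.diagonal fun i => (if i = 0 then 0 else (E : ℂ))

private lemma key0 (a b : ℝ) (ha0 : 0 < a) (ha1 : a ≤ 1) (hb0 : 0 < b) (hb1 : b ≤ 1)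
    (B : Fin 2 × Fin 2 → Fin 2 × Fin 2 → ℝ)
    (hpos : ∀ i j, 0 ≤ B i j)
    (hrow : ∀ i, ∑ j, B i j = 1)
    (hcol : ∀ j, ∑ i, B i j = 1) :
    ∑ j : Fin 2 × Fin 2,
      ((if j.1 = 0 then (1:ℝ) else a) * (if j.2 = 0 then 1 else b)) *
        ((if j.1 = 0 then (0:ℝ) else 1) + (if j.2 = 0 then 0 else 1)) ≤
    ∑ i : Fin 2 × Fin 2, ∑ j : Fin 2 × Fin 2,
      B i j * (((if j.1 = 0 then (1:ℝ) else a) * (if j.2 = 0 then 1 else b)) *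
        ((if i.1 = 0 then (0:ℝ) else 1) + (if i.2 = 0 then 0 else 1))) := by
  have h00 := hrow (0,0); have h01 := hrow (0,1); have h10 := hrow (1,0); have h11 := hrow (1,1)
  have c00 := hcol (0,0); have c01 := hcol (0,1); have c10 := hcol (1,0); have c11 := hcol (1,1)
  have hab : a * b ≤ 1 := by nlinarith
  have k1 := mul_nonneg (hpos (0,0) (0,1)) (sub_nonneg.2 hb1)
  have k2 := mul_nonneg (hpos (0,0) (1,0)) (sub_nonneg.2 ha1)
  have k3 := mul_nonneg (hpos (0,0) (1,1)) (sub_nonneg.2 hab)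
  have k4 := mul_nonneg (hpos (1,1) (0,0)) (sub_nonneg.2 hab)
  have k5 := mul_nonneg (hpos (1,1) (0,1)) (mul_nonneg hb0.le (sub_nonneg.2 ha1))
  have k6 := mul_nonneg (hpos (1,1) (1,0)) (mul_nonneg ha0.le (sub_nonneg.2 hb1))
  clear hpos hrow hcol
  simp [Fintype.sum_prod_type, Fin.sum_univ_two] at *
  nlinarith [k1, k2, k3, k4, k5, k6]

private lemma key1 (E a b : ℝ) (hE : 0 < E)
    (ha0 : 0 < a) (ha1 : a ≤ 1) (hb0 : 0 < b) (hb1 : b ≤ 1)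
    (B : Fin 2 × Fin 2 → Fin 2 × Fin 2 → ℝ)
    (hpos : ∀ i j, 0 ≤ B i j)
    (hrow : ∀ i, ∑ j, B i j = 1)
    (hcol : ∀ j, ∑ i, B i j = 1) :
    ∑ j : Fin 2 × Fin 2,
      (((if j.1 = 0 then (1:ℝ) else a) / (1 + a)) * ((if j.2 = 0 then 1 else b) / (1 + b))) *
        ((if j.1 = 0 then (0:ℝ) else E) + (if j.2 = 0 then 0 else E)) ≤
    ∑ i : Fin 2 × Fin 2, ∑ j : Fin 2 × Fin 2,
      B i j * ((((if j.1 = 0 then (1:ℝ) else a) / (1 + a)) * ((if j.2 = 0 then 1 else b) / (1 + b))) *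
        ((if i.1 = 0 then (0:ℝ) else E) + (if i.2 = 0 then 0 else E))) := by
  have hZ1 : (0:ℝ) < 1 + a := by linarith
  have hZ2 : (0:ℝ) < 1 + b := by linarith
  have base := key0 a b ha0 ha1 hb0 hb1 B hpos hrow hcol
  rw [← sub_nonneg] at base ⊢
  have heq :
      (∑ i : Fin 2 × Fin 2, ∑ j : Fin 2 × Fin 2,
        B i j * ((((if j.1 = 0 then (1:ℝ) else a) / (1 + a)) * ((if j.2 = 0 then 1 else b) / (1 + b))) *
          ((if i.1 = 0 then (0:ℝ) else E) + (if i.2 = 0 then 0 else E)))) -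
      (∑ j : Fin 2 × Fin 2,
        (((if j.1 = 0 then (1:ℝ) else a) / (1 + a)) * ((if j.2 = 0 then 1 else b) / (1 + b))) *
          ((if j.1 = 0 then (0:ℝ) else E) + (if j.2 = 0 then 0 else E))) =
      (E / ((1 + a) * (1 + b))) *
      ((∑ i : Fin 2 × Fin 2, ∑ j : Fin 2 × Fin 2,
        B i j * (((if j.1 = 0 then (1:ℝ) else a) * (if j.2 = 0 then 1 else b)) *
          ((if i.1 = 0 then (0:ℝ) else 1) + (if i.2 = 0 then 0 else 1)))) -
      (∑ j : Fin 2 × Fin 2,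
        ((if j.1 = 0 then (1:ℝ) else a) * (if j.2 = 0 then 1 else b)) *
          ((if j.1 = 0 then (0:ℝ) else 1) + (if j.2 = 0 then 0 else 1)))) := by
    simp only [Fintype.sum_prod_type, Fin.sum_univ_two]
    norm_num
    field_simp
    ring
  rw [heq]
  exact mul_nonneg (by positivity) base

/-- No unitary heat engine exists on two two-level systems with equal energy
gaps, whatever their temperatures: every `4×4` unitary `U` satisfies
`tr(U ρ U† H) ≥ tr(ρ H)` for `ρ = γ_{T_A} ⊗ γ_{T_B}` and
`H = diag(0,E) ⊗ I + I ⊗ diag(0,E)`. -/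
theorem stmt_6 (E T_A T_B : ℝ) (hE : 0 < E) (hTA : 0 < T_A) (hTB : 0 < T_B) :
    ∀ U ∈ Matrix.unitaryGroup (Fin 2 × Fin 2) ℂ,
      (Matrix.trace ((qubitGibbs E T_A ⊗ₖ qubitGibbs E T_B) *
          (qubitHam E ⊗ₖ (1 : Matrix (Fin 2) (Fin 2) ℂ) +
            (1 : Matrix (Fin 2) (Fin 2) ℂ) ⊗ₖ qubitHam E))).re ≤
      (Matrix.trace (U * (qubitGibbs E T_A ⊗ₖ qubitGibbs E T_B) * star U *
          (qubitHam E ⊗ₖ (1 : Matrix (Fin 2) (Fin 2) ℂ) +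
            (1 : Matrix (Fin 2) (Fin 2) ℂ) ⊗ₖ qubitHam E))).re := by
  intro U hU
  set a := Real.exp (-E / T_A) with ha_def
  set b := Real.exp (-E / T_B) with hb_def
  set P : Fin 2 × Fin 2 → ℝ := fun i =>
    ((if i.1 = 0 then (1:ℝ) else a) / (1 + a)) * ((if i.2 = 0 then (1:ℝ) else b) / (1 + b))
    with hP_def
  set En : Fin 2 × Fin 2 → ℝ := fun i =>
    (if i.1 = 0 then (0:ℝ) else E) + (if i.2 = 0 then (0:ℝ) else E) with hEn_def
  -- the state is diagonal
  have hρ : qubitGibbs E T_A ⊗ₖ qubitGibbs E T_B =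
      Matrix.diagonal (fun i => (P i : ℂ)) := by
    rw [qubitGibbs, qubitGibbs, Matrix.diagonal_kronecker_diagonal]
    refine congrArg Matrix.diagonal (funext fun i => ?_)
    simp only [hP_def]
    push_cast [-Complex.ofReal_exp]
    ring
  -- the Hamiltonian is diagonal
  have hH : qubitHam E ⊗ₖ (1 : Matrix (Fin 2) (Fin 2) ℂ) +
      (1 : Matrix (Fin 2) (Fin 2) ℂ) ⊗ₖ qubitHam E =
      Matrix.diagonal (fun i => (En i : ℂ)) := by
    rw [qubitHam, ← Matrix.diagonal_one, Matrix.diagonal_kronecker_diagonal,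
      Matrix.diagonal_kronecker_diagonal, Matrix.diagonal_add]
    refine congrArg Matrix.diagonal (funext fun i => ?_)
    simp only [hEn_def]
    push_cast [apply_ite Complex.ofReal]
    ring
  rw [hρ, hH]
  -- the left trace
  have L : Matrix.trace (Matrix.diagonal (fun i => (P i : ℂ)) *
      Matrix.diagonal (fun i => (En i : ℂ))) =
      ((∑ i : Fin 2 × Fin 2, P i * En i : ℝ) : ℂ) := by
    rw [Matrix.diagonal_mul_diagonal, Matrix.trace_diagonal]
    push_cast
    rfl
  -- the right trace
  have R : Matrix.trace (U * Matrix.diagonal (fun i => (P i : ℂ)) * star U *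
      Matrix.diagonal (fun i => (En i : ℂ))) =
      ((∑ i : Fin 2 × Fin 2, ∑ j : Fin 2 × Fin 2,
        Complex.normSq (U i j) * (P j * En i) : ℝ) : ℂ) := by
    rw [Matrix.trace]
    push_cast
    refine Finset.sum_congr rfl fun i _ => ?_
    rw [Matrix.diag_apply, Matrix.mul_diagonal, Matrix.mul_apply, Finset.sum_mul]
    refine Finset.sum_congr rfl fun j _ => ?_
    rw [Matrix.mul_diagonal, Matrix.star_apply]
    calc U i j * (P j : ℂ) * star (U i j) * (En i : ℂ)
        = U i j * star (U i j) * ((P j : ℂ) * (En i : ℂ)) := by ring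
      _ = (Complex.normSq (U i j) : ℂ) * ((P j : ℂ) * (En i : ℂ)) := by
          rw [show star (U i j) = starRingEnd ℂ (U i j) from rfl, Complex.mul_conj]
  rw [L, R, Complex.ofReal_re, Complex.ofReal_re]
  -- unitarity constraints
  have h1 : U * star U = 1 := Matrix.mem_unitaryGroup_iff.mp hU
  have h2 : star U * U = 1 := Matrix.mem_unitaryGroup_iff'.mp hU
  have hrow : ∀ i, ∑ j, Complex.normSq (U i j) = 1 := by
    intro i
    have h := congrFun (congrFun h1 i) i
    rw [Matrix.mul_apply, Matrix.one_apply_eq] at h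
    have h' : ((∑ j, Complex.normSq (U i j) : ℝ) : ℂ) = 1 := by
      push_cast
      rw [← h]
      refine Finset.sum_congr rfl fun j _ => ?_
      rw [Matrix.star_apply, show star (U i j) = starRingEnd ℂ (U i j) from rfl,
        Complex.mul_conj]
    exact_mod_cast h'
  have hcol : ∀ j, ∑ i, Complex.normSq (U i j) = 1 := by
    intro j
    have h := congrFun (congrFun h2 j) j
    rw [Matrix.mul_apply, Matrix.one_apply_eq] at h
    have h' : ((∑ i, Complex.normSq (U i j) : ℝ) : ℂ) = 1 := by
      push_cast
      rw [← h]
      refine Finset.sum_congr rfl fun i _ => ?_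
      rw [Matrix.star_apply, show star (U i j) = starRingEnd ℂ (U i j) from rfl,
        mul_comm, Complex.mul_conj]
    exact_mod_cast h'
  have ha0 : 0 < a := Real.exp_pos _
  have hb0 : 0 < b := Real.exp_pos _
  have ha1 : a ≤ 1 := (Real.exp_lt_one_iff.2 (div_neg_of_neg_of_pos (neg_lt_zero.2 hE) hTA)).le
  have hb1 : b ≤ 1 := (Real.exp_lt_one_iff.2 (div_neg_of_neg_of_pos (neg_lt_zero.2 hE) hTB)).le
  have hpos : ∀ i j : Fin 2 × Fin 2, 0 ≤ Complex.normSq (U i j) := fun i j => Complex.normSq_nonneg _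
  simp only [hP_def, hEn_def]
  exact key1 E a b hE ha0 ha1 hb0 hb1 (fun i j => Complex.normSq (U i j)) hpos hrow hcol
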